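/- Let (T, u, x, 𝓋) be a strict-sense process. Define σ(t) := t + 𝓋(t) for t ∈ [0,T], S := σ(T), and y⁰ := σ⁻¹ : [0,S] → [0,T]. Then y⁰ is Lipschitz and strictly increasing, and the tuple (S, w⁰, w, y⁰, y, β), with w⁰ := dy⁰/ds, w := (u ∘ y⁰)·(dy⁰/ds), y := x ∘ y⁰, β := 𝓋 ∘ y⁰, is a canonical embedded strict-sense extended process: (w⁰, w) ∈ L^∞([0,S], [0,∞) × 𝒞), w⁰ > 0 a.e., w⁰ + |w| = 1 a.e. on [0,S], and (y⁰, y, β) is the solution of the extended integral equations with controls (w⁰, w). Moreover (y⁰(S), y(S), β(S)) = (T, x(T), 𝓋(T)). -/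

import Mathlib

open MeasureTheory Set Filter
open scoped ENNReal InnerProductSpace BigOperators

noncomputable section

/-- `Vec k` is the Euclidean space `ℝ^k`. -/
abbrev Vec (k : ℕ) : Type := EuclideanSpace ℝ (Fin k)

/-- Raw data of an extended process `(S, w⁰, w, y⁰, y, β)`. -/
structure RawProc (n m : ℕ) where
  S : ℝ
  w0 : ℝ → ℝ
  w : ℝ → Vec m
  y0 : ℝ → ℝ
  y : ℝ → Vec n
  β : ℝ → ℝ

/-- Lebesgue measure restricted to `[0,S]`. -/
def μres (S : ℝ) : Measure ℝ := volume.restrict (Icc 0 S)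

/-- `Γ` is a cone (closed under multiplication by nonnegative scalars). -/
def IsConeIn {F : Type*} [SMul ℝ F] (Γ : Set F) : Prop :=
  ∀ c : ℝ, 0 ≤ c → ∀ v ∈ Γ, c • v ∈ Γ

/-- The vector fields `f, g₁, …, g_m` are `C¹` and bounded together with their
first derivatives. -/
def GoodDyn {n m : ℕ} (f : Vec n → Vec n) (g : Fin m → Vec n → Vec n) : Prop :=
  ContDiff ℝ 1 f ∧ (∀ i, ContDiff ℝ 1 (g i)) ∧
  ∃ M : ℝ, (∀ x, ‖f x‖ ≤ M) ∧ (∀ i x, ‖g i x‖ ≤ M) ∧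
    (∀ x, ‖fderiv ℝ f x‖ ≤ M) ∧ (∀ i x, ‖fderiv ℝ (g i) x‖ ≤ M)

variable {n m : ℕ}

/-- `z = (S, w⁰, w, y⁰, y, β)` is an extended process for the dynamics `f, g`,
control cone `C` and initial point `x0`. -/
def IsExtProcess (f : Vec n → Vec n) (g : Fin m → Vec n → Vec n)
    (C : Set (Vec m)) (x0 : Vec n) (z : RawProc n m) : Prop :=
  0 < z.S ∧ Measurable z.w0 ∧ Measurable z.w ∧
  (∃ M : ℝ, ∀ᵐ s ∂μres z.S, |z.w0 s| + ‖z.w s‖ ≤ M) ∧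
  (∀ᵐ s ∂μres z.S, 0 ≤ z.w0 s ∧ z.w s ∈ C) ∧
  (∃ c : ℝ, 0 < c ∧ ∀ᵐ s ∂μres z.S, c ≤ z.w0 s + ‖z.w s‖) ∧
  (∀ s, s ∉ Ico (0:ℝ) z.S → z.w0 s = 0 ∧ z.w s = 0) ∧
  (∀ s ∈ Icc (0:ℝ) z.S, z.y0 s = ∫ t in (0:ℝ)..s, z.w0 t) ∧
  (∀ s ∈ Icc (0:ℝ) z.S, z.y s = x0 + ∫ t in (0:ℝ)..s,
      (z.w0 t • f (z.y t) + ∑ i, z.w t i • g i (z.y t))) ∧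
  (∀ s ∈ Icc (0:ℝ) z.S, z.β s = ∫ t in (0:ℝ)..s, ‖z.w t‖) ∧
  (∀ s, z.S ≤ s → z.y0 s = z.y0 z.S ∧ z.y s = z.y z.S ∧ z.β s = z.β z.S)

/-- Embedded strict-sense process: `w⁰ > 0` a.e. on `[0,S]`. -/
def IsEmbedded (z : RawProc n m) : Prop := ∀ᵐ s ∂μres z.S, 0 < z.w0 s

/-- Canonical process: `w⁰ + |w| = 1` a.e. on `[0,S]`. -/
def IsCanonical (z : RawProc n m) : Prop := ∀ᵐ s ∂μres z.S, z.w0 s + ‖z.w s‖ = 1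

/-- Feasibility: endpoint in the target and energy bounded by `K`. -/
def Feasible (Tgt : Set (ℝ × Vec n)) (K : ℝ≥0∞) (z : RawProc n m) : Prop :=
  (z.y0 z.S, z.y z.S) ∈ Tgt ∧ ENNReal.ofReal (z.β z.S) ≤ K

/-- The control distance `d̃`. -/
def dtil (z1 z2 : RawProc n m) : ℝ :=
  |z1.S - z2.S| +
    ∫ s in (0:ℝ)..(max z1.S z2.S), (|z1.w0 s - z2.w0 s| + ‖z1.w s - z2.w s‖)

/-- The control distance `d` (Euclidean norm of the control pair, integrated on
`[0, S₁ ∧ S₂]`). -/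
def dcan (z1 z2 : RawProc n m) : ℝ :=
  |z1.S - z2.S| +
    ∫ s in (0:ℝ)..(min z1.S z2.S),
      Real.sqrt ((z1.w0 s - z2.w0 s) ^ 2 + ‖z1.w s - z2.w s‖ ^ 2)

/-- `σ` realizes `z` as a time-reparametrization of `zt`. -/
def TimeChangeOf (z zt : RawProc n m) (σ : ℝ → ℝ) : Prop :=
  StrictMonoOn σ (Icc 0 z.S) ∧ σ '' Icc 0 z.S = Icc 0 zt.S ∧
  (∃ L1 > (0:ℝ), ∃ L2 : ℝ, ∀ s ∈ Icc (0:ℝ) z.S, ∀ t ∈ Icc (0:ℝ) z.S,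
      L1 * |s - t| ≤ |σ s - σ t| ∧ |σ s - σ t| ≤ L2 * |s - t|) ∧
  (∀ᵐ s ∂μres z.S, DifferentiableAt ℝ σ s ∧
      z.w0 s = zt.w0 (σ s) * deriv σ s ∧ z.w s = deriv σ s • zt.w (σ s)) ∧
  (∀ s ∈ Icc (0:ℝ) z.S, z.y0 s = zt.y0 (σ s) ∧ z.y s = zt.y (σ s) ∧ z.β s = zt.β (σ s))

/-- Equivalence of extended processes. -/
def EquivProc (z zt : RawProc n m) : Prop := ∃ σ : ℝ → ℝ, TimeChangeOf z zt σ

/-- Local infimum gap at `zb` with respect to `(X^𝒮_{W̃₊}, d̃)`. -/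
def GapTil (f : Vec n → Vec n) (g : Fin m → Vec n → Vec n) (C : Set (Vec m)) (x0 : Vec n)
    (Tgt : Set (ℝ × Vec n)) (K : ℝ≥0∞) (Ψ : ℝ × Vec n → ℝ) (zb : RawProc n m) : Prop :=
  ∃ r > (0:ℝ), ∃ ε > (0:ℝ), ∀ z : RawProc n m,
    IsExtProcess f g C x0 z → IsEmbedded z → Feasible Tgt K z → dtil z zb < r →
      Ψ (zb.y0 zb.S, zb.y zb.S) + ε ≤ Ψ (z.y0 z.S, z.y z.S)

/-- Local infimum gap at `zb` with respect to `(X^𝒮_{W₊}, d)` (canonical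
embedded strict-sense processes only). -/
def GapCan (f : Vec n → Vec n) (g : Fin m → Vec n → Vec n) (C : Set (Vec m)) (x0 : Vec n)
    (Tgt : Set (ℝ × Vec n)) (K : ℝ≥0∞) (Ψ : ℝ × Vec n → ℝ) (zb : RawProc n m) : Prop :=
  ∃ r > (0:ℝ), ∃ ε > (0:ℝ), ∀ z : RawProc n m,
    IsExtProcess f g C x0 z → IsEmbedded z → IsCanonical z → Feasible Tgt K z →
      dcan z zb < r → Ψ (zb.y0 zb.S, zb.y zb.S) + ε ≤ Ψ (z.y0 z.S, z.y z.S)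

/-- Raw data of a strict-sense process `(T, u, x, 𝓋)`. -/
structure RawStrict (n m : ℕ) where
  T : ℝ
  u : ℝ → Vec m
  x : ℝ → Vec n
  v : ℝ → ℝ

/-- `(T, u, x, 𝓋)` is a strict-sense process. -/
def IsStrictProcess (f : Vec n → Vec n) (g : Fin m → Vec n → Vec n)
    (C : Set (Vec m)) (x0 : Vec n) (P : RawStrict n m) : Prop :=
  0 < P.T ∧ Measurable P.u ∧ IntegrableOn P.u (Icc 0 P.T) ∧
  (∀ᵐ t ∂μres P.T, P.u t ∈ C) ∧
  (∀ t ∈ Icc (0:ℝ) P.T,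
      P.x t = x0 + ∫ τ in (0:ℝ)..t, (f (P.x τ) + ∑ i, P.u τ i • g i (P.x τ))) ∧
  (∀ t ∈ Icc (0:ℝ) P.T, P.v t = ∫ τ in (0:ℝ)..t, ‖P.u τ‖)

/-- Lie bracket `[h,k] = Dk·h − Dh·k` of two vector fields. -/
def lieB {n : ℕ} (h k : Vec n → Vec n) : Vec n → Vec n :=
  fun x => fderiv ℝ k x (h x) - fderiv ℝ h x (k x)

/-- Iterated Lie brackets of the vector fields `g₁, …, g_{m₁}`. -/
inductive IterLie {n m : ℕ} (g : Fin m → Vec n → Vec n) (m1 : ℕ) : (Vec n → Vec n) → Prop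
  | base (i : Fin m) (hi : (i : ℕ) < m1) : IterLie g m1 (g i)
  | brk {h k : Vec n → Vec n} : IterLie g m1 h → IterLie g m1 k → IterLie g m1 (lieB h k)

/-- The extended control set `Ĉ`. -/
def Chat {m : ℕ} (C : Set (Vec m)) : Set (ℝ × Vec m) :=
  closure {c : ℝ × Vec m | 0 < c.1 ∧ c.2 ∈ C ∧ c.1 + ‖c.2‖ = 1}

/-- The unmaximized Hamiltonian. -/
def Hham {n m : ℕ} (f : Vec n → Vec n) (g : Fin m → Vec n → Vec n)
    (x p : Vec n) (p0 piv w0 : ℝ) (w : Vec m) : ℝ :=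
  p0 * w0 + ⟪p, w0 • f x + ∑ i, w i • g i x⟫_ℝ + piv * ‖w‖

/-- A modulus. -/
def IsModulus (ρ : ℝ → ℝ) : Prop :=
  (∀ s t : ℝ, 0 ≤ s → s ≤ t → ρ s ≤ ρ t) ∧ (∀ s : ℝ, 0 ≤ s → 0 ≤ ρ s) ∧ ρ 0 = 0 ∧
    Tendsto ρ (nhdsWithin 0 (Ioi 0)) (nhds 0)

/-- Quasi Differential Quotient of a set-valued map `G` at `(ξ, ybar)` in the
direction of `Γ`. -/
def IsQDQ {N : ℕ} {F : Type*} [NormedAddCommGroup F] [NormedSpace ℝ F]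
    (G : Vec N → Set F) (ξ : Vec N) (ybar : F) (Γ : Set (Vec N))
    (Λ : Set (Vec N →L[ℝ] F)) : Prop :=
  IsCompact Λ ∧ ∃ ρ : ℝ → ℝ, IsModulus ρ ∧ ∃ δb > (0:ℝ), ∀ δ ∈ Icc (0:ℝ) δb,
    ∃ L : Vec N → (Vec N →L[ℝ] F), ∃ h : Vec N → F,
      ContinuousOn (fun x => (L x, h x)) (Metric.ball ξ δ ∩ Γ) ∧
      ∀ x ∈ Metric.ball ξ δ ∩ Γ,
        ybar + L x (x - ξ) + h x ∈ G x ∧ ‖h x‖ ≤ δ * ρ δ ∧ ∃ L' ∈ Λ, ‖L x - L'‖ ≤ ρ δ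

/-- QDQ approximating cone to `E` at `z`. -/
def IsQDQApproxCone {F : Type*} [NormedAddCommGroup F] [NormedSpace ℝ F]
    (E : Set F) (z : F) (Kc : Set F) : Prop :=
  z ∈ E ∧ Convex ℝ Kc ∧ IsConeIn Kc ∧
  ∃ N : ℕ, ∃ G : Vec N → Set F, ∃ Γ : Set (Vec N), ∃ ξ : Vec N, ∃ L : Vec N →L[ℝ] F,
    Convex ℝ Γ ∧ IsConeIn Γ ∧ IsQDQ G ξ z Γ {L} ∧
    (∀ γ ∈ Γ, G (ξ + γ) ⊆ E) ∧ Kc = L '' Γ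

/-- The vector fields are smooth and bounded together with all derivatives. -/
def SmoothDyn {n m : ℕ} (f : Vec n → Vec n) (g : Fin m → Vec n → Vec n) : Prop :=
  ContDiff ℝ (⊤ : ℕ∞) f ∧ (∀ i, ContDiff ℝ (⊤ : ℕ∞) (g i)) ∧
  (∀ k : ℕ, ∃ M : ℝ, ∀ x, ‖iteratedFDeriv ℝ k f x‖ ≤ M) ∧
  (∀ i, ∀ k : ℕ, ∃ M : ℝ, ∀ x, ‖iteratedFDeriv ℝ k (g i) x‖ ≤ M)

/-- Mixing of the first `m1` coordinates of `v` with the remaining coordinates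
of `v'`. -/
def mixVec {m : ℕ} (m1 : ℕ) (v v' : Vec m) : Vec m :=
  ∑ i : Fin m,
    if (i : ℕ) < m1 then EuclideanSpace.single i (v i) else EuclideanSpace.single i (v' i)

/-- `(p, p0, π, λ)` is a multiplier tuple making `zb` a higher-order
`Ψ`-extremal with respect to the QDQ approximating cone `Kc`. -/
def HOMultiplier {n m : ℕ} (f : Vec n → Vec n) (g : Fin m → Vec n → Vec n) (m1 : ℕ)
    (C : Set (Vec m)) (K : ℝ≥0∞) (Ψ : ℝ × Vec n → ℝ) (Kc : Set (ℝ × Vec n))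
    (zb : RawProc n m) (p : ℝ → Vec n) (p0 piv lam : ℝ) : Prop :=
  piv ≤ 0 ∧ 0 ≤ lam ∧
  -- (i) non-triviality
  (p0 ≠ 0 ∨ (∃ s ∈ Icc (0:ℝ) zb.S, p s ≠ 0) ∨ lam ≠ 0) ∧
  (0 < zb.y0 zb.S → ((∃ s ∈ Icc (0:ℝ) zb.S, p s ≠ 0) ∨ lam ≠ 0)) ∧
  -- (ii) non-transversality
  (∃ q G : ℝ × Vec n,
    (∀ v ∈ Kc, q.1 * v.1 + ⟪q.2, v.2⟫_ℝ ≤ 0) ∧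
    (∀ v : ℝ × Vec n, fderiv ℝ Ψ (zb.y0 zb.S, zb.y zb.S) v = G.1 * v.1 + ⟪G.2, v.2⟫_ℝ) ∧
    (p0, p zb.S) = -lam • G - q) ∧
  (ENNReal.ofReal (zb.β zb.S) < K → piv = 0) ∧
  -- (iii) adjoint equation (integral form)
  (∀ s ∈ Icc (0:ℝ) zb.S, p s = p 0 - ∫ t in (0:ℝ)..s,
      (zb.w0 t • (ContinuousLinearMap.adjoint (fderiv ℝ f (zb.y t))) (p t)
        + ∑ i, zb.w t i • (ContinuousLinearMap.adjoint (fderiv ℝ (g i) (zb.y t))) (p t))) ∧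
  -- (iv) first order maximization
  (∀ᵐ s ∂μres zb.S, ∀ c ∈ Chat C,
      Hham f g (zb.y s) (p s) p0 piv c.1 c.2
        ≤ Hham f g (zb.y s) (p s) p0 piv (zb.w0 s) (zb.w s)) ∧
  -- (v) vanishing of the (maximized) Hamiltonian
  (∀ s ∈ Icc (0:ℝ) zb.S,
      IsLUB ((fun c : ℝ × Vec m => Hham f g (zb.y s) (p s) p0 piv c.1 c.2) '' Chat C) 0) ∧
  (ENNReal.ofReal (zb.β zb.S) < K →
      ∀ s ∈ Icc (0:ℝ) zb.S, ∀ i : Fin m, (i : ℕ) < m1 → ⟪p s, g i (zb.y s)⟫_ℝ = 0) ∧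
  -- (vi) higher-order conditions
  (ENNReal.ofReal (zb.β zb.S) < K →
      ∀ B : Vec n → Vec n, IterLie g m1 B →
        (∀ s ∈ Icc (0:ℝ) zb.S, ⟪p s, B (zb.y s)⟫_ℝ = 0) ∧
        (∀ᵐ s ∂μres zb.S,
            ⟪p s, zb.w0 s • lieB f B (zb.y s)
              + ∑ j : Fin m,
                  (if m1 ≤ (j : ℕ) then zb.w s j • lieB (g j) B (zb.y s) else 0)⟫_ℝ = 0))

end
lemma coord_abs_le_norm {m : ℕ} (v : Vec m) (i : Fin m) : |v i| ≤ ‖v‖ := by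
  rw [EuclideanSpace.norm_eq]
  calc |v i| = Real.sqrt (‖v i‖ ^ 2) := by
        rw [Real.sqrt_sq_eq_abs, Real.norm_eq_abs, abs_abs]
    _ ≤ Real.sqrt (∑ j, ‖v j‖ ^ 2) :=
        Real.sqrt_le_sqrt (Finset.single_le_sum (f := fun j => ‖v j‖ ^ 2)
          (fun j _ => sq_nonneg _) (Finset.mem_univ i))

lemma aux_int {n m : ℕ} (f : Vec n → Vec n) (g : Fin m → Vec n → Vec n)
    (hfc : Continuous f) (hgc : ∀ i, Continuous (g i)) (M : ℝ)
    (hMf : ∀ x, ‖f x‖ ≤ M) (hMg : ∀ i x, ‖g i x‖ ≤ M)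
    (T : ℝ) (hT : 0 ≤ T) (u : ℝ → Vec m) (hu : Measurable u)
    (hui : IntegrableOn u (Icc 0 T)) (x : ℝ → Vec n) (x0 : Vec n)
    (hx : ∀ t ∈ Icc (0:ℝ) T, x t = x0 + ∫ τ in (0:ℝ)..t, (f (x τ) + ∑ i, u τ i • g i (x τ))) :
    IntegrableOn (fun τ => f (x τ) + ∑ i, u τ i • g i (x τ)) (Icc 0 T) := by
  set G : ℝ → Vec n := fun τ => f (x τ) + ∑ i, u τ i • g i (x τ) with hGdef
  have hM0 : 0 ≤ M := le_trans (norm_nonneg _) (hMf (x 0))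
  have hGb : ∀ τ, ‖G τ‖ ≤ M + ((m : ℝ) * M) * ‖u τ‖ := by
    intro τ
    have h1 : ‖∑ i, u τ i • g i (x τ)‖ ≤ ∑ i : Fin m, |u τ i| * M := by
      refine (norm_sum_le _ _).trans (Finset.sum_le_sum fun i _ => ?_)
      rw [norm_smul, Real.norm_eq_abs]
      exact mul_le_mul_of_nonneg_left (hMg i _) (abs_nonneg _)
    have h2 : ∑ i : Fin m, |u τ i| * M ≤ ∑ _i : Fin m, ‖u τ‖ * M :=
      Finset.sum_le_sum fun i _ => mul_le_mul_of_nonneg_right (coord_abs_le_norm _ i) hM0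
    have h3 : ∑ _i : Fin m, ‖u τ‖ * M = ((m : ℝ) * M) * ‖u τ‖ := by
      rw [Finset.sum_const, Finset.card_univ, Fintype.card_fin, nsmul_eq_mul]; ring
    calc ‖G τ‖ ≤ ‖f (x τ)‖ + ‖∑ i, u τ i • g i (x τ)‖ := norm_add_le _ _
      _ ≤ M + ((m : ℝ) * M) * ‖u τ‖ := add_le_add (hMf _) (h1.trans (h2.trans_eq h3))
  have hdom : IntegrableOn (fun τ => M + ((m : ℝ) * M) * ‖u τ‖) (Icc 0 T) := by
    refine Integrable.add ?_ ?_
    · exact integrableOn_const (by rw [Real.volume_Icc]; exact ENNReal.ofReal_ne_top)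
    · exact hui.norm.const_mul _
  set D := {t : ℝ | t ∈ Icc 0 T ∧ IntegrableOn G (Ioc 0 t)} with hDdef
  have hD0 : (0:ℝ) ∈ D := ⟨⟨le_rfl, hT⟩, by rw [Set.Ioc_self]; exact integrableOn_empty⟩
  have hDb : BddAbove D := ⟨T, fun t ht => ht.1.2⟩
  set e := sSup D with hedef
  have he0 : 0 ≤ e := le_csSup hDb hD0
  have heT : e ≤ T := csSup_le ⟨0, hD0⟩ fun t ht => ht.1.2
  have hdown : ∀ t, t < e → IntegrableOn G (Ioc 0 t) := by
    intro t ht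
    obtain ⟨d, hd, htd⟩ := exists_lt_of_lt_csSup ⟨0, hD0⟩ ht
    exact hd.2.mono_set (Set.Ioc_subset_Ioc_right htd.le)
  have hASMe : AEStronglyMeasurable G (volume.restrict (Ioo 0 e)) := by
    rcases eq_or_lt_of_le he0 with h0e | h0e
    · rw [← h0e, Set.Ioo_self, Measure.restrict_empty]
      exact aestronglyMeasurable_zero_measure (f := G)
    · have hcover : Ioo (0:ℝ) e = ⋃ k : ℕ, Ioc 0 (e - e / ((k:ℝ) + 2)) := by
        ext τ
        simp only [Set.mem_Ioo, Set.mem_iUnion, Set.mem_Ioc]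
        constructor
        · rintro ⟨h1, h2⟩
          obtain ⟨k, hk⟩ := exists_nat_gt (e / (e - τ))
          refine ⟨k, h1, ?_⟩
          have hden : 0 < e - τ := by linarith
          have hk2 : (0:ℝ) < (k:ℝ) + 2 := by positivity
          have h4 : e / (e - τ) < (k:ℝ) + 2 := by linarith
          have h5 : e < ((k:ℝ) + 2) * (e - τ) := (div_lt_iff₀ hden).1 h4
          have h6 : e / ((k:ℝ) + 2) ≤ e - τ := (div_le_iff₀ hk2).2 (by nlinarith)
          linarith
        · rintro ⟨k, h1, h2⟩
          have hk2 : (0:ℝ) < (k:ℝ) + 2 := by positivity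
          have : 0 < e / ((k:ℝ) + 2) := div_pos h0e hk2
          exact ⟨h1, by linarith⟩
      rw [hcover, aestronglyMeasurable_iUnion_iff]
      intro k
      have hlt : e - e / ((k:ℝ) + 2) < e := by
        have : 0 < e / ((k:ℝ) + 2) := div_pos h0e (by positivity)
        linarith
      exact (hdown _ hlt).1
  have heD : IntegrableOn G (Ioc 0 e) := by
    have hmeas : AEStronglyMeasurable G (volume.restrict (Ioc 0 e)) := by
      rw [← Measure.restrict_congr_set Ioo_ae_eq_Ioc]; exact hASMe
    exact Integrable.mono'
      (hdom.mono_set (Set.Ioc_subset_Icc_self.trans (Set.Icc_subset_Icc_right heT)))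
      hmeas (Filter.Eventually.of_forall hGb)
  have hIT : IntegrableOn G (Ioc 0 T) := by
    rcases eq_or_lt_of_le heT with heq | hlt
    · rwa [heq] at heD
    · have hxconst : ∀ t ∈ Ioc e T, x t = x0 := by
        intro t ht
        have ht0 : 0 < t := lt_of_le_of_lt he0 ht.1
        have hnint : ¬ IntegrableOn G (Ioc 0 t) := by
          intro h
          have htD : t ∈ D := ⟨⟨ht0.le, ht.2⟩, h⟩
          exact absurd (le_csSup hDb htD) (not_le.2 ht.1)
        have hxt := hx t ⟨ht0.le, ht.2⟩
        rw [intervalIntegral.integral_of_le ht0.le] at hxt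
        rw [MeasureTheory.integral_undef hnint] at hxt
        simpa using hxt
      have hxm : AEStronglyMeasurable x (volume.restrict (Ioc e T)) := by
        refine (aestronglyMeasurable_const (b := x0)).congr ?_
        filter_upwards [self_mem_ae_restrict measurableSet_Ioc] with t ht
        exact (hxconst t ht).symm
      have hGm : AEStronglyMeasurable G (volume.restrict (Ioc e T)) := by
        apply AEStronglyMeasurable.add
        · exact hfc.comp_aestronglyMeasurable hxm
        · apply Finset.aestronglyMeasurable_fun_sum
          intro i _
          have hcoord : Measurable fun τ => u τ i :=
            (EuclideanSpace.proj (𝕜 := ℝ) i).continuous.measurable.comp hu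
          exact AEStronglyMeasurable.smul hcoord.aestronglyMeasurable
            ((hgc i).comp_aestronglyMeasurable hxm)
      have h2 : IntegrableOn G (Ioc e T) :=
        Integrable.mono'
          (hdom.mono_set (Set.Ioc_subset_Icc_self.trans (Set.Icc_subset_Icc_left he0)))
          hGm (Filter.Eventually.of_forall hGb)
      have h3 := heD.union h2
      rwa [Set.Ioc_union_Ioc_eq_Ioc he0 heT] at h3
  have h0 : IntegrableOn G ({0} : Set ℝ) := by
    have hz : volume.restrict ({0} : Set ℝ) = 0 := Measure.restrict_eq_zero.2 (by simp)
    rw [IntegrableOn, hz]; exact integrable_zero_measure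
  have h4 := h0.union hIT
  rwa [Set.singleton_union, Set.Ioc_insert_left hT] at h4

lemma master_change {E : Type*} [NormedAddCommGroup E] [NormedSpace ℝ E]
    (S T : ℝ) (y0 : ℝ → ℝ) (U : ℝ → ℝ) (hUmeas : Measurable U) (hUnn : ∀ t, 0 ≤ U t)
    (c : ℝ → ℝ) (hc : Continuous c)
    (hkey : ∀ᵐ σ ∂(volume.restrict (Icc 0 S)),
      deriv y0 σ = (1 + U (y0 σ))⁻¹ ∧ σ ∈ Ico 0 S)
    (hceq : ∀ σ ∈ Icc (0:ℝ) S, c σ = y0 σ)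
    (hrange : ∀ σ ∈ Icc (0:ℝ) S, y0 σ ∈ Icc 0 T)
    {s : ℝ} (hs : s ∈ Icc (0:ℝ) S)
    (hmap : Measure.map c (volume.restrict (Icc 0 s))
      = (volume.withDensity fun t => ENNReal.ofReal (1 + U t)).restrict (Icc 0 (y0 s)))
    (F : ℝ → E) (hF : IntegrableOn F (Icc 0 T)) :
    ∫ σ in (0:ℝ)..s, ((if σ ∈ Ico (0:ℝ) S then deriv y0 σ else 0) • F (y0 σ))
      = ∫ t in (0:ℝ)..(y0 s), F t := by
  have hys := hrange s hs
  set H : ℝ → E := fun t => (1 + U t)⁻¹ • F t with hH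
  have hpos : ∀ t, (0:ℝ) < 1 + U t := fun t => by have := hUnn t; linarith
  have hHm : AEStronglyMeasurable H
      ((volume.withDensity fun t => ENNReal.ofReal (1 + U t)).restrict (Icc 0 (y0 s))) := by
    have h1 : AEStronglyMeasurable F (volume.restrict (Icc 0 (y0 s))) :=
      hF.1.mono_measure (Measure.restrict_mono (Icc_subset_Icc_right hys.2) le_rfl)
    have h2 : (volume.withDensity fun t => ENNReal.ofReal (1 + U t)).restrict (Icc 0 (y0 s))
        ≪ volume.restrict (Icc 0 (y0 s)) := by
      rw [restrict_withDensity measurableSet_Icc]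
      exact withDensity_absolutelyContinuous _ _
    exact AEStronglyMeasurable.mono_ac h2
      (((measurable_const.add hUmeas).inv).aestronglyMeasurable.smul h1)
  calc ∫ σ in (0:ℝ)..s, ((if σ ∈ Ico (0:ℝ) S then deriv y0 σ else 0) • F (y0 σ))
      = ∫ σ in Set.Ioc 0 s, ((if σ ∈ Ico (0:ℝ) S then deriv y0 σ else 0) • F (y0 σ)) :=
        intervalIntegral.integral_of_le hs.1
    _ = ∫ σ in Set.Icc 0 s, ((if σ ∈ Ico (0:ℝ) S then deriv y0 σ else 0) • F (y0 σ)) := by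
        rw [Measure.restrict_congr_set Ioc_ae_eq_Icc]
    _ = ∫ σ in Set.Icc 0 s, H (c σ) := by
        apply integral_congr_ae
        have hle : volume.restrict (Icc (0:ℝ) s) ≤ volume.restrict (Icc 0 S) :=
          Measure.restrict_mono (Icc_subset_Icc_right hs.2) le_rfl
        filter_upwards [ae_mono hle hkey, ae_restrict_mem measurableSet_Icc] with σ hσ hmem
        obtain ⟨hd, hIco⟩ := hσ
        have hσS : σ ∈ Icc (0:ℝ) S := ⟨hmem.1, hmem.2.trans hs.2⟩
        rw [if_pos hIco, hd, hceq σ hσS]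
    _ = ∫ t, H t ∂(Measure.map c (volume.restrict (Icc 0 s))) :=
        (integral_map hc.aemeasurable (by rwa [hmap])).symm
    _ = ∫ t, H t ∂((volume.withDensity fun t => ENNReal.ofReal (1 + U t)).restrict
          (Icc 0 (y0 s))) := by rw [hmap]
    _ = ∫ t in Icc (0:ℝ) (y0 s), F t := by
        rw [restrict_withDensity measurableSet_Icc]
        rw [show (fun t => ENNReal.ofReal (1 + U t))
            = (fun t => ((fun t => (1 + U t).toNNReal) t : ℝ≥0∞)) from rfl]
        rw [integral_withDensity_eq_integral_smul (show Measurable (fun t => (1 + U t).toNNReal) from (measurable_const.add hUmeas).real_toNNReal) H]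
        apply integral_congr_ae (Filter.Eventually.of_forall fun t => ?_)
        rw [NNReal.smul_def, Real.coe_toNNReal _ (hpos t).le, hH]
        rw [smul_smul, mul_inv_cancel₀ (hpos t).ne', one_smul]
    _ = ∫ t in Set.Ioc (0:ℝ) (y0 s), F t := integral_Icc_eq_integral_Ioc
    _ = ∫ t in (0:ℝ)..(y0 s), F t := (intervalIntegral.integral_of_le hys.1).symm


/-- The time change `σ(t) = t + 𝓋(t)` embeds every strict-sense process
into a canonical embedded strict-sense extended process with the same endpoint. -/
theorem stmt_4 {n m : ℕ} (f : Vec n → Vec n) (g : Fin m → Vec n → Vec n)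
    (C : Set (Vec m)) (x0 : Vec n)
    (hdyn : GoodDyn f g) (hCclosed : IsClosed C) (hCcone : IsConeIn C)
    (P : RawStrict n m) (hP : IsStrictProcess f g C x0 P)
    (S : ℝ) (hS : S = P.T + P.v P.T)
    (y0 : ℝ → ℝ)
    (hrange : ∀ s ∈ Icc (0:ℝ) S, y0 s ∈ Icc (0:ℝ) P.T)
    (hinv1 : ∀ t ∈ Icc (0:ℝ) P.T, y0 (t + P.v t) = t)
    (hinv2 : ∀ s ∈ Icc (0:ℝ) S, y0 s + P.v (y0 s) = s)
    (hext : ∀ s, S ≤ s → y0 s = P.T) :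
    (∃ Kl : NNReal, LipschitzOnWith Kl y0 (Icc 0 S)) ∧ StrictMonoOn y0 (Icc 0 S) ∧
    ∀ zb : RawProc n m,
      zb = { S := S
             w0 := fun s => if s ∈ Ico (0:ℝ) S then deriv y0 s else 0
             w := fun s => if s ∈ Ico (0:ℝ) S then deriv y0 s • P.u (y0 s) else 0
             y0 := y0
             y := fun s => P.x (y0 s)
             β := fun s => P.v (y0 s) } →
      IsExtProcess f g C x0 zb ∧ IsEmbedded zb ∧ IsCanonical zb ∧
        zb.y0 zb.S = P.T ∧ zb.y zb.S = P.x P.T ∧ zb.β zb.S = P.v P.T := by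

  obtain ⟨hT, hu, hui, huC, hxeq, hveq⟩ := hP
  obtain ⟨hf1, hg1, M, hMf, hMg, -, -⟩ := hdyn
  have hnormII : ∀ a b : ℝ, 0 ≤ a → a ≤ b → b ≤ P.T →
      IntervalIntegrable (fun τ => ‖P.u τ‖) volume a b := by
    intro a b ha hab hb
    refine IntegrableOn.intervalIntegrable ?_
    rw [Set.uIcc_of_le hab]
    exact IntegrableOn.mono_set hui.norm (Set.Icc_subset_Icc ha hb)
  have hvnn : ∀ t ∈ Icc (0:ℝ) P.T, 0 ≤ P.v t := by
    intro t ht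
    rw [hveq t ht]
    exact intervalIntegral.integral_nonneg ht.1 (fun τ _ => norm_nonneg _)
  have hvmono : ∀ a b, a ∈ Icc (0:ℝ) P.T → b ∈ Icc (0:ℝ) P.T → a ≤ b → P.v a ≤ P.v b := by
    intro a b ha hb hab
    rw [hveq a ha, hveq b hb]
    have h := intervalIntegral.integral_interval_sub_left
      (hnormII 0 b le_rfl hb.1 hb.2) (hnormII 0 a le_rfl ha.1 ha.2)
    have h2 : 0 ≤ ∫ τ in a..b, ‖P.u τ‖ :=
      intervalIntegral.integral_nonneg hab fun τ _ => norm_nonneg _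
    linarith
  have hv0 : P.v 0 = 0 := by
    have := hveq 0 ⟨le_rfl, hT.le⟩; simpa using this
  have hvT : 0 ≤ P.v P.T := hvnn P.T ⟨hT.le, le_rfl⟩
  have hS0 : 0 < S := by rw [hS]; linarith
  have hTS : P.T ≤ S := by rw [hS]; linarith
  have hy0S : y0 S = P.T := hext S le_rfl
  have hmono2 : ∀ s ∈ Icc (0:ℝ) S, ∀ s' ∈ Icc (0:ℝ) S, s ≤ s' →
      y0 s ≤ y0 s' ∧ y0 s' - y0 s ≤ s' - s := by
    intro s hs s' hs' hss
    rcases le_or_gt (y0 s) (y0 s') with h | h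
    · have hv := hvmono _ _ (hrange s hs) (hrange s' hs') h
      have e1 := hinv2 s hs
      have e2 := hinv2 s' hs'
      exact ⟨h, by linarith⟩
    · exfalso
      have hv := hvmono _ _ (hrange s' hs') (hrange s hs) h.le
      have e1 := hinv2 s hs
      have e2 := hinv2 s' hs'
      linarith
  have hstrict : StrictMonoOn y0 (Icc 0 S) := by
    intro s hs s' hs' hss
    have h := (hmono2 s hs s' hs' hss.le).1
    rcases eq_or_lt_of_le h with he | hl
    · exfalso
      have e1 := hinv2 s hs
      have e2 := hinv2 s' hs'
      rw [← he] at e2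
      have : s = s' := by linarith
      exact absurd this (ne_of_lt hss)
    · exact hl
  have hlip : LipschitzOnWith 1 y0 (Icc 0 S) := by
    apply LipschitzOnWith.of_dist_le_mul
    intro a ha b hb
    rw [NNReal.coe_one, one_mul, Real.dist_eq, Real.dist_eq]
    rcases le_total a b with h | h
    · have h2 := hmono2 a ha b hb h
      rw [abs_sub_comm (y0 a), abs_of_nonneg (sub_nonneg.2 h2.1), abs_sub_comm a,
        abs_of_nonneg (sub_nonneg.2 h)]
      linarith [h2.2]
    · have h2 := hmono2 b hb a ha h
      rw [abs_of_nonneg (sub_nonneg.2 h2.1), abs_of_nonneg (sub_nonneg.2 h)]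
      linarith [h2.2]
  have hy0cont : ContinuousOn y0 (Icc 0 S) := hlip.continuousOn
  set U : ℝ → ℝ := fun t => if t ∈ Icc (0:ℝ) P.T then ‖P.u t‖ else 0 with hUdef
  have hUmeas : Measurable U := Measurable.ite measurableSet_Icc hu.norm measurable_const
  have hUnn : ∀ t, 0 ≤ U t := by
    intro t; rw [hUdef]; dsimp only
    split
    · exact norm_nonneg _
    · exact le_rfl
  have hUint : Integrable U := by
    have hind : U = (Icc (0:ℝ) P.T).indicator fun t => ‖P.u t‖ := by
      funext t; rw [hUdef]; simp [Set.indicator]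
    rw [hind]
    exact IntegrableOn.integrable_indicator hui.norm measurableSet_Icc
  set V : ℝ → ℝ := fun t => ∫ τ in (0:ℝ)..t, U τ with hVdef
  have hVeq : ∀ t ∈ Icc (0:ℝ) P.T, V t = P.v t := by
    intro t ht
    rw [hveq t ht, hVdef]
    refine intervalIntegral.integral_congr fun τ hτ => ?_
    rw [Set.uIcc_of_le ht.1] at hτ
    exact if_pos ⟨hτ.1, hτ.2.trans ht.2⟩
  have hVmono : Monotone V := by
    intro a b hab
    have h : V b - V a = ∫ τ in a..b, U τ :=
      intervalIntegral.integral_interval_sub_left (f := U) (μ := volume)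
        hUint.intervalIntegrable hUint.intervalIntegrable
    have h2 : 0 ≤ ∫ τ in a..b, U τ :=
      intervalIntegral.integral_nonneg hab fun τ _ => hUnn τ
    linarith
  have hVcont : Continuous V :=
    intervalIntegral.continuous_primitive (fun a b => hUint.intervalIntegrable) 0
  have hstj : ∀ t, hVmono.stieltjesFunction t = V t := by
    intro t
    rw [Monotone.stieltjesFunction_eq]
    exact rightLim_eq_of_tendsto
      ((hVcont.tendsto t).mono_left nhdsWithin_le_nhds)
  have hμV : hVmono.stieltjesFunction.measure
      = volume.withDensity fun t => ENNReal.ofReal (U t) := by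
    refine Measure.ext_of_Ioc _ _ fun a b hab => ?_
    rw [StieltjesFunction.measure_Ioc, hstj a, hstj b,
      withDensity_apply _ measurableSet_Ioc,
      ← ofReal_integral_eq_lintegral_ofReal hUint.restrict
        (Filter.Eventually.of_forall hUnn)]
    congr 1
    have h : V b - V a = ∫ τ in a..b, U τ :=
      intervalIntegral.integral_interval_sub_left (f := U) (μ := volume)
        hUint.intervalIntegrable hUint.intervalIntegrable
    rw [← intervalIntegral.integral_of_le hab.le]
    exact h
  have hDer : ∀ᵐ t : ℝ, HasDerivAt V (U t) t := by
    have h1 := hVmono.ae_hasDerivAt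
    have h2 : (hVmono.stieltjesFunction.measure).rnDeriv volume
        =ᵐ[volume] fun t => ENNReal.ofReal (U t) := by
      rw [hμV]
      exact Measure.rnDeriv_withDensity volume (ENNReal.measurable_ofReal.comp hUmeas)
    filter_upwards [h1, h2] with t ht h2t
    rw [h2t, ENNReal.toReal_ofReal (hUnn t)] at ht
    exact ht
  set c : ℝ → ℝ := fun σ => y0 (max 0 (min σ S)) with hcdef
  have hcmem : ∀ σ : ℝ, max 0 (min σ S) ∈ Icc (0:ℝ) S :=
    fun σ => ⟨le_max_left _ _, max_le hS0.le (min_le_right _ _)⟩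
  have hccont : Continuous c :=
    hy0cont.comp_continuous (continuous_const.max (continuous_id.min continuous_const)) hcmem
  have hceq : ∀ σ ∈ Icc (0:ℝ) S, c σ = y0 σ := by
    intro σ hσ
    rw [hcdef]; dsimp only
    rw [min_eq_left hσ.2, max_eq_right hσ.1]
  set μ' : Measure ℝ := volume.withDensity fun t => ENNReal.ofReal (1 + U t) with hμ'def
  have hμ'Icc : ∀ b ∈ Icc (0:ℝ) P.T, μ' (Icc 0 b) = ENNReal.ofReal (b + P.v b) := by
    intro b hb
    haveI : IsFiniteMeasure (volume.restrict (Icc (0:ℝ) b)) :=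
      ⟨by rw [Measure.restrict_apply_univ, Real.volume_Icc]; exact ENNReal.ofReal_lt_top⟩
    have hint : Integrable (fun t => 1 + U t) (volume.restrict (Icc (0:ℝ) b)) :=
      (integrable_const 1).add hUint.restrict
    rw [hμ'def, withDensity_apply _ measurableSet_Icc,
      ← ofReal_integral_eq_lintegral_ofReal hint
        (Filter.Eventually.of_forall fun t => by have := hUnn t; positivity)]
    congr 1
    have hadd : ∫ t in Icc (0:ℝ) b, (1 + U t)
        = (∫ _t in Icc (0:ℝ) b, (1:ℝ)) + ∫ t in Icc (0:ℝ) b, U t :=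
      MeasureTheory.integral_add (integrable_const 1) hUint.restrict
    rw [hadd, setIntegral_const, measureReal_def, Real.volume_Icc,
      ENNReal.toReal_ofReal (by linarith [hb.1] : (0:ℝ) ≤ b - 0),
      smul_eq_mul, mul_one, sub_zero]
    have h2 : ∫ t in Icc (0:ℝ) b, U t = P.v b := by
      rw [MeasureTheory.integral_Icc_eq_integral_Ioc, ← intervalIntegral.integral_of_le hb.1]
      exact hVeq b hb
    rw [h2]
  have hmapM : ∀ s ∈ Icc (0:ℝ) S,
      Measure.map c (volume.restrict (Icc 0 s)) = μ'.restrict (Icc 0 (y0 s)) := by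
    intro s hs
    have hys := hrange s hs
    haveI : IsFiniteMeasure (volume.restrict (Icc (0:ℝ) s)) :=
      ⟨by rw [Measure.restrict_apply_univ, Real.volume_Icc]; exact ENNReal.ofReal_lt_top⟩
    refine Measure.ext_of_Iic _ _ fun b => ?_
    rw [Measure.map_apply hccont.measurable measurableSet_Iic,
      Measure.restrict_apply' measurableSet_Icc, Measure.restrict_apply' measurableSet_Icc]
    rcases lt_or_ge b 0 with hb | hb0
    · have h1 : c ⁻¹' Iic b ∩ Icc 0 s = ∅ := by
        apply Set.eq_empty_iff_forall_notMem.2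
        rintro σ ⟨h1, h2⟩
        have hσS : σ ∈ Icc (0:ℝ) S := ⟨h2.1, h2.2.trans hs.2⟩
        rw [Set.mem_preimage, Set.mem_Iic, hceq σ hσS] at h1
        have := (hrange σ hσS).1
        linarith
      have h2 : Iic b ∩ Icc 0 (y0 s) = ∅ := by
        apply Set.eq_empty_iff_forall_notMem.2
        rintro t ⟨h1, h2⟩
        rw [Set.mem_Iic] at h1
        exact absurd (h2.1.trans h1) (not_le.2 hb)
      rw [h1, h2]; simp
    · rcases lt_or_ge b (y0 s) with hby | hby
      · have hbT : b ∈ Icc (0:ℝ) P.T := ⟨hb0, hby.le.trans hys.2⟩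
        have hσb : b + P.v b ≤ s := by
          have h1 := hinv2 s hs
          have h2 := hvmono b (y0 s) hbT hys hby.le
          linarith
        have hvb := hvnn b hbT
        have h1 : c ⁻¹' Iic b ∩ Icc 0 s = Icc 0 (b + P.v b) := by
          ext σ
          simp only [Set.mem_inter_iff, Set.mem_preimage, Set.mem_Iic, Set.mem_Icc]
          constructor
          · rintro ⟨h1, h2, h3⟩
            have hσS : σ ∈ Icc (0:ℝ) S := ⟨h2, h3.trans hs.2⟩
            rw [hceq σ hσS] at h1
            have h4 := hinv2 σ hσS
            have h5 := hvmono (y0 σ) b (hrange σ hσS) hbT h1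
            exact ⟨h2, by linarith⟩
          · rintro ⟨h1, h2⟩
            have hσs : σ ≤ s := h2.trans hσb
            have hσS : σ ∈ Icc (0:ℝ) S := ⟨h1, hσs.trans hs.2⟩
            refine ⟨?_, h1, hσs⟩
            rw [hceq σ hσS]
            have hbvS : b + P.v b ∈ Icc (0:ℝ) S := ⟨by linarith, hσb.trans hs.2⟩
            have h6 := (hmono2 σ hσS (b + P.v b) hbvS h2).1
            rwa [hinv1 b hbT] at h6
        have h2 : Iic b ∩ Icc 0 (y0 s) = Icc 0 b := by
          ext t
          simp only [Set.mem_inter_iff, Set.mem_Iic, Set.mem_Icc]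
          constructor
          · rintro ⟨ha, hb', _⟩; exact ⟨hb', ha⟩
          · rintro ⟨h1', h2'⟩; exact ⟨h2', h1', h2'.trans hby.le⟩
        rw [h1, h2, Real.volume_Icc, sub_zero, hμ'Icc b hbT]
      · have h1 : c ⁻¹' Iic b ∩ Icc 0 s = Icc 0 s := by
          rw [Set.inter_eq_right]
          intro σ hσ
          have hσS : σ ∈ Icc (0:ℝ) S := ⟨hσ.1, hσ.2.trans hs.2⟩
          rw [Set.mem_preimage, Set.mem_Iic, hceq σ hσS]
          exact ((hmono2 σ hσS s hs hσ.2).1).trans hby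
        have h2 : Iic b ∩ Icc 0 (y0 s) = Icc 0 (y0 s) := by
          rw [Set.inter_eq_right]
          intro t ht
          exact Set.mem_Iic.2 (ht.2.trans hby)
        rw [h1, h2, Real.volume_Icc, sub_zero, hμ'Icc (y0 s) hys, hinv2 s hs]
  have htransN : ∀ N : Set ℝ, volume (N ∩ Icc 0 P.T) = 0 →
      ∀ᵐ σ ∂volume.restrict (Icc 0 S), y0 σ ∉ N := by
    intro N hN
    set Mset := toMeasurable volume (N ∩ Icc 0 P.T) with hMdef
    have hMmeas : MeasurableSet Mset := measurableSet_toMeasurable _ _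
    have hM0 : volume Mset = 0 := by rw [hMdef, measure_toMeasurable]; exact hN
    have hμ'M : μ' Mset = 0 := by
      rw [hμ'def]; exact withDensity_absolutelyContinuous volume _ hM0
    have hmapS := hmapM S ⟨hS0.le, le_rfl⟩
    have h1 : volume.restrict (Icc 0 S) (c ⁻¹' Mset) = 0 := by
      rw [← Measure.map_apply hccont.measurable hMmeas, hmapS]
      exact le_antisymm
        (le_trans (Measure.le_iff'.1 Measure.restrict_le_self Mset) hμ'M.le) zero_le
    have h2 : ∀ᵐ σ ∂volume.restrict (Icc 0 S), c σ ∉ Mset := by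
      have hset : {σ : ℝ | ¬ c σ ∉ Mset} = c ⁻¹' Mset := by ext σ; simp
      rw [ae_iff, hset]; exact h1
    filter_upwards [h2, ae_restrict_mem measurableSet_Icc] with σ hσ1 hσ2
    intro hyN
    exact hσ1 (by rw [hceq σ hσ2]; exact subset_toMeasurable _ _ ⟨hyN, hrange σ hσ2⟩)
  have haeT : ∀ {Q : ℝ → Prop}, (∀ᵐ t ∂volume.restrict (Icc 0 P.T), Q t) →
      ∀ᵐ σ ∂volume.restrict (Icc 0 S), Q (y0 σ) := by
    intro Q hQ
    rw [ae_iff, Measure.restrict_apply' measurableSet_Icc] at hQ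
    filter_upwards [htransN _ hQ] with σ hσ
    by_contra h
    exact hσ h
  have hW : ∀ᵐ t ∂volume.restrict (Icc 0 P.T), HasDerivAt (fun τ => τ + V τ) (1 + U t) t :=
    ae_restrict_of_ae (hDer.mono fun t ht => (hasDerivAt_id t).add ht)
  have hIoo : ∀ᵐ σ ∂volume.restrict (Icc 0 S), σ ∈ Ioo 0 S := by
    rw [ae_iff, Measure.restrict_apply' measurableSet_Icc]
    refine measure_mono_null (fun σ hσ => ?_)
      (((Set.finite_singleton S).insert 0).measure_zero volume)
    obtain ⟨h1, h2⟩ := hσ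
    simp only [Set.mem_setOf_eq, Set.mem_Ioo, not_and, not_lt] at h1
    simp only [Set.mem_insert_iff, Set.mem_singleton_iff]
    rcases eq_or_lt_of_le h2.1 with h | h
    · exact Or.inl h.symm
    · exact Or.inr (le_antisymm h2.2 (h1 h))
  have hkey : ∀ᵐ σ ∂volume.restrict (Icc 0 S),
      deriv y0 σ = (1 + U (y0 σ))⁻¹ ∧ σ ∈ Ico 0 S ∧ P.u (y0 σ) ∈ C := by
    filter_upwards [haeT hW, haeT huC, hIoo, ae_restrict_mem measurableSet_Icc]
      with σ hWσ hCσ hIooσ hIccσ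
    have hcontAt : ContinuousAt y0 σ :=
      (hy0cont σ hIccσ).continuousAt (Icc_mem_nhds hIooσ.1 hIooσ.2)
    have hpos : (0:ℝ) < 1 + U (y0 σ) := by have := hUnn (y0 σ); linarith
    have hfg : ∀ᶠ r in nhds σ, (fun τ => τ + V τ) (y0 r) = r := by
      filter_upwards [Ioo_mem_nhds hIooσ.1 hIooσ.2] with r hr
      have hrS : r ∈ Icc (0:ℝ) S := ⟨hr.1.le, hr.2.le⟩
      show y0 r + V (y0 r) = r
      rw [hVeq (y0 r) (hrange r hrS)]
      exact hinv2 r hrS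
    have hder : HasDerivAt y0 (1 + U (y0 σ))⁻¹ σ :=
      HasDerivAt.of_local_left_inverse hcontAt hWσ (ne_of_gt hpos) hfg
    exact ⟨hder.deriv, ⟨hIooσ.1.le, hIooσ.2⟩, hCσ⟩
  have hUy : ∀ σ ∈ Icc (0:ℝ) S, U (y0 σ) = ‖P.u (y0 σ)‖ := fun σ hσ => if_pos (hrange σ hσ)
  have hkey2 : ∀ᵐ σ ∂volume.restrict (Icc 0 S),
      deriv y0 σ = (1 + ‖P.u (y0 σ)‖)⁻¹ ∧ σ ∈ Ico 0 S ∧ P.u (y0 σ) ∈ C := by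
    filter_upwards [hkey, ae_restrict_mem measurableSet_Icc] with σ hσ hmem
    exact ⟨by rw [← hUy σ hmem]; exact hσ.1, hσ.2.1, hσ.2.2⟩
  have hkeyM : ∀ᵐ σ ∂volume.restrict (Icc 0 S),
      deriv y0 σ = (1 + U (y0 σ))⁻¹ ∧ σ ∈ Ico 0 S :=
    hkey.mono fun σ h => ⟨h.1, h.2.1⟩
  have hGint : IntegrableOn (fun τ => f (P.x τ) + ∑ i, P.u τ i • g i (P.x τ)) (Icc 0 P.T) :=
    aux_int f g hf1.continuous (fun i => (hg1 i).continuous) M hMf hMg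
      P.T hT.le P.u hu hui P.x x0 hxeq
  refine ⟨⟨1, hlip⟩, hstrict, ?_⟩
  rintro zb rfl
  have hcanon : ∀ᵐ s ∂volume.restrict (Icc 0 S),
      ((if s ∈ Ico (0:ℝ) S then deriv y0 s else 0)
        + ‖(if s ∈ Ico (0:ℝ) S then deriv y0 s • P.u (y0 s) else 0)‖ = 1) ∧
      (0 < (if s ∈ Ico (0:ℝ) S then deriv y0 s else 0)) ∧
      ((if s ∈ Ico (0:ℝ) S then deriv y0 s • P.u (y0 s) else 0) ∈ C) := by
    filter_upwards [hkey2] with s hs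
    obtain ⟨hd, hIco, hC⟩ := hs
    have hpos : (0:ℝ) < 1 + ‖P.u (y0 s)‖ := by positivity
    rw [if_pos hIco, if_pos hIco, hd]
    refine ⟨?_, inv_pos.2 hpos, hCcone _ (inv_nonneg.2 hpos.le) _ hC⟩
    rw [norm_smul, Real.norm_eq_abs, abs_of_nonneg (inv_nonneg.2 hpos.le)]
    field_simp
  refine ⟨⟨hS0, ?_, ?_, ⟨1, ?_⟩, ?_, ⟨1, one_pos, ?_⟩, ?_, ?_, ?_, ?_, ?_⟩, ?_, ?_, ?_, ?_, ?_⟩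
  · exact Measurable.ite measurableSet_Ico (measurable_deriv y0) measurable_const
  · have hrw : (fun s => if s ∈ Ico (0:ℝ) S then deriv y0 s • P.u (y0 s) else 0)
        = fun s => if s ∈ Ico (0:ℝ) S then deriv y0 s • P.u (c s) else 0 := by
      funext s; by_cases h : s ∈ Ico (0:ℝ) S
      · rw [if_pos h, if_pos h, hceq s ⟨h.1, h.2.le⟩]
      · rw [if_neg h, if_neg h]
    show Measurable fun s => if s ∈ Ico (0:ℝ) S then deriv y0 s • P.u (y0 s) else 0
    rw [hrw]
    exact Measurable.ite measurableSet_Ico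
      ((measurable_deriv y0).smul (hu.comp hccont.measurable)) measurable_const
  · filter_upwards [hcanon] with s hs
    obtain ⟨he, hpos, -⟩ := hs
    show |if s ∈ Ico (0:ℝ) S then deriv y0 s else 0|
        + ‖if s ∈ Ico (0:ℝ) S then deriv y0 s • P.u (y0 s) else 0‖ ≤ 1
    rw [abs_of_pos hpos]
    exact he.le
  · filter_upwards [hcanon] with s hs
    exact ⟨hs.2.1.le, hs.2.2⟩
  · filter_upwards [hcanon] with s hs
    exact hs.1.ge
  · intro s hs
    exact ⟨if_neg hs, if_neg hs⟩
  · intro s hs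
    have hm := master_change S P.T y0 U hUmeas hUnn c hccont hkeyM hceq hrange hs
      (hmapM s hs) (fun _ => (1:ℝ))
      (integrableOn_const (by rw [Real.volume_Icc]; exact ENNReal.ofReal_ne_top))
    simp only [smul_eq_mul, mul_one] at hm
    show y0 s = ∫ t in (0:ℝ)..s, (if t ∈ Ico (0:ℝ) S then deriv y0 t else 0)
    rw [hm, intervalIntegral.integral_const]
    simp
  · intro s hs
    have hm := master_change S P.T y0 U hUmeas hUnn c hccont hkeyM hceq hrange hs
      (hmapM s hs) (fun τ => f (P.x τ) + ∑ i, P.u τ i • g i (P.x τ)) hGint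
    have hpt : ∀ t : ℝ, ((if t ∈ Ico (0:ℝ) S then deriv y0 t else 0)
          • (f (P.x (y0 t)) + ∑ i, P.u (y0 t) i • g i (P.x (y0 t))))
        = ((if t ∈ Ico (0:ℝ) S then deriv y0 t else 0) • f (P.x (y0 t))
          + ∑ i, (if t ∈ Ico (0:ℝ) S then deriv y0 t • P.u (y0 t) else 0) i
              • g i (P.x (y0 t))) := by
      intro t
      by_cases h : t ∈ Ico (0:ℝ) S
      · rw [if_pos h, if_pos h]
        rw [smul_add, Finset.smul_sum]
        congr 1
        refine Finset.sum_congr rfl fun i _ => ?_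
        rw [smul_smul,
          show (deriv y0 t • P.u (y0 t)) i = deriv y0 t * P.u (y0 t) i from rfl]
      · rw [if_neg h, if_neg h, zero_smul]
        symm
        rw [zero_smul, zero_add]
        refine Finset.sum_eq_zero fun i _ => ?_
        rw [show ((0 : Vec m) i) = (0:ℝ) from rfl, zero_smul]
    show P.x (y0 s) = x0 + ∫ t in (0:ℝ)..s,
      ((if t ∈ Ico (0:ℝ) S then deriv y0 t else 0) • f (P.x (y0 t))
        + ∑ i, (if t ∈ Ico (0:ℝ) S then deriv y0 t • P.u (y0 t) else 0) i
            • g i (P.x (y0 t)))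
    rw [hxeq (y0 s) (hrange s hs)]
    congr 1
    rw [← hm]
    exact intervalIntegral.integral_congr fun t _ => hpt t
  · intro s hs
    have hm := master_change S P.T y0 U hUmeas hUnn c hccont hkeyM hceq hrange hs
      (hmapM s hs) (fun t => ‖P.u t‖) hui.norm
    show P.v (y0 s) = ∫ t in (0:ℝ)..s,
      ‖if t ∈ Ico (0:ℝ) S then deriv y0 t • P.u (y0 t) else 0‖
    rw [hveq (y0 s) (hrange s hs), ← hm, intervalIntegral.integral_of_le hs.1,
      intervalIntegral.integral_of_le hs.1]
    apply integral_congr_ae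
    have hsub : Ioc (0:ℝ) s ⊆ Icc 0 S := fun x hx => ⟨hx.1.le, hx.2.trans hs.2⟩
    have hle : volume.restrict (Ioc (0:ℝ) s) ≤ volume.restrict (Icc 0 S) :=
      Measure.restrict_mono hsub le_rfl
    filter_upwards [ae_mono hle hkey2] with t ht
    obtain ⟨hd, hIco, -⟩ := ht
    rw [if_pos hIco, if_pos hIco, norm_smul, Real.norm_eq_abs, hd,
      abs_of_nonneg (inv_nonneg.2 (by positivity)), smul_eq_mul]
  · intro s hsS
    have h1 : y0 s = y0 S := (hext s hsS).trans hy0S.symm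
    exact ⟨h1, show P.x (y0 s) = P.x (y0 S) by rw [h1],
      show P.v (y0 s) = P.v (y0 S) by rw [h1]⟩
  · filter_upwards [hcanon] with s hs
    exact hs.2.1
  · filter_upwards [hcanon] with s hs
    exact hs.1
  · exact hy0S
  · show P.x (y0 S) = P.x P.T
    rw [hy0S]
  · show P.v (y0 S) = P.v P.T
    rw [hy0S]
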